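/- arXiv:2412.09904 — 2 statements merged into one kernel-verified Lean document; each statement's English description precedes it below -/
import Mathlib

section
/- Let n = 4t with t ≥ 1. The maximum eigenvalue of the Hadamard graph H_n equals C(n, n/2), and it is attained exactly at a = 0 and a = (1,1,...,1); i.e., Σ_{x: wt(x)=n/2} (-1)^{x·a} = C(n,n/2) iff a ∈ {0_n, 1_n}, and is strictly smaller otherwise. -/
/-- Hamming weight of a binary vector. -/
def hw {n : ℕ} (x : Fin n → ZMod 2) : ℕ :=
  (Finset.univ.filter (fun i => x i ≠ 0)).card

/-!
Each term of the eigenvalue sum is `±1` and there are `C(n, n/2)` terms, so the sum is at most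
`C(n, n/2)`, with equality iff `x ⬝ᵥ a = 0` for every `x` of weight `n/2`. This holds for `a = 0`,
and for `a = 1` because `x ⬝ᵥ 1 = wt x = n/2` is even. For any other `a`, pick `i` with `a i = 1`,
`j` with `a j = 0` and a set `s` of `n/2 - 1` further coordinates: the characteristic vectors of
`s ∪ {i}` and `s ∪ {j}` both have weight `n/2` and their products with `a` differ by `1`.
-/

open Finset

lemma zmod_two_eq_zero_or_one (z : ZMod 2) : z = 0 ∨ z = 1 := by
  revert z; decide

lemma neg_one_pow_val_eq_one_iff (z : ZMod 2) : (-1 : ℤ) ^ z.val = 1 ↔ z = 0 := by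
  rcases zmod_two_eq_zero_or_one z with rfl | rfl <;> simp [show (1 : ZMod 2).val = 1 from rfl]

lemma neg_one_pow_val_le_one (z : ZMod 2) : (-1 : ℤ) ^ z.val ≤ 1 := by
  rcases zmod_two_eq_zero_or_one z with rfl | rfl <;> simp [show (1 : ZMod 2).val = 1 from rfl]

section charVec

variable {ι R : Type*} [DecidableEq ι] [Semiring R]

def charVec (s : Finset ι) : ι → R := fun i => if i ∈ s then 1 else 0

lemma dotProduct_charVec [Fintype ι] (s : Finset ι) (a : ι → R) :
    charVec s ⬝ᵥ a = ∑ i ∈ s, a i := by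
  simp [dotProduct, charVec]

end charVec

section

variable {n : ℕ}

lemma filter_charVec_ne_zero (s : Finset (Fin n)) :
    univ.filter (fun i => (charVec s i : ZMod 2) ≠ 0) = s := by
  ext i; by_cases h : i ∈ s <;> simp [charVec, h]

lemma hw_charVec (s : Finset (Fin n)) : hw (charVec s : Fin n → ZMod 2) = #s := by
  rw [hw, filter_charVec_ne_zero]

lemma charVec_support (x : Fin n → ZMod 2) : charVec (univ.filter (fun i => x i ≠ 0)) = x := by
  funext i; rcases zmod_two_eq_zero_or_one (x i) with h | h <;> simp [charVec, h]

lemma sum_eq_hw (x : Fin n → ZMod 2) : ∑ i, x i = hw x := by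
  calc ∑ i, x i = charVec (univ.filter (fun i => x i ≠ 0)) ⬝ᵥ 1 := by
        rw [charVec_support, dotProduct_one]
    _ = hw x := by simp [dotProduct_charVec, hw]

lemma card_filter_hw_eq (k : ℕ) :
    #(univ.filter (fun x : Fin n → ZMod 2 => hw x = k)) = n.choose k := by
  rw [← card_fin n, ← card_powersetCard k (univ : Finset (Fin n)), card_fin]
  refine card_nbij' (fun x => univ.filter (fun i => x i ≠ 0)) charVec ?_ ?_ ?_ ?_
  · intro x hx; simpa [mem_powersetCard, hw] using hx
  · intro s hs; simpa [mem_powersetCard, hw_charVec] using hs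
  · intro x _; exact charVec_support x
  · intro s _; exact filter_charVec_ne_zero s

def weightCharSum (w : ℕ) (a : Fin n → ZMod 2) : ℤ :=
  ∑ x ∈ univ.filter (fun x : Fin n → ZMod 2 => hw x = w), (-1) ^ (x ⬝ᵥ a).val

lemma weightCharSum_le_choose (w : ℕ) (a : Fin n → ZMod 2) :
    weightCharSum w a ≤ n.choose w := by
  rw [weightCharSum, ← card_filter_hw_eq w, card_eq_sum_ones, Nat.cast_sum, Nat.cast_one]
  exact sum_le_sum fun x _ => neg_one_pow_val_le_one _

lemma weightCharSum_eq_choose_iff (w : ℕ) (a : Fin n → ZMod 2) :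
    weightCharSum w a = n.choose w ↔ ∀ x : Fin n → ZMod 2, hw x = w → x ⬝ᵥ a = 0 := by
  rw [weightCharSum, ← card_filter_hw_eq w, card_eq_sum_ones, Nat.cast_sum, Nat.cast_one,
    sum_eq_sum_iff_of_le fun x _ => neg_one_pow_val_le_one _]
  simp [neg_one_pow_val_eq_one_iff]

lemma exists_hw_eq_dotProduct_eq_one {w : ℕ} (hw0 : 0 < w) (hwn : w < n)
    {a : Fin n → ZMod 2} (ha0 : a ≠ 0) (ha1 : a ≠ 1) : ∃ x, hw x = w ∧ x ⬝ᵥ a = 1 := by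
  obtain ⟨i, hi⟩ : ∃ i, a i = 1 := by
    obtain ⟨i, hi⟩ := Function.ne_iff.mp ha0
    exact ⟨i, (zmod_two_eq_zero_or_one (a i)).resolve_left hi⟩
  obtain ⟨j, hj⟩ : ∃ j, a j = 0 := by
    obtain ⟨j, hj⟩ := Function.ne_iff.mp ha1
    exact ⟨j, (zmod_two_eq_zero_or_one (a j)).resolve_right hj⟩
  have hij : i ≠ j := by rintro rfl; simp [hi] at hj
  obtain ⟨s, hs, hcard⟩ := exists_subset_card_eq (s := univ \ {i, j}) (n := w - 1) (by
    rw [card_sdiff_of_subset (subset_univ _), card_pair hij, card_fin]; omega)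
  have his : i ∉ s := fun h => by simpa using hs h
  have hjs : j ∉ s := fun h => by simpa using hs h
  rcases zmod_two_eq_zero_or_one (∑ k ∈ s, a k) with h | h
  · refine ⟨charVec (insert i s), ?_, ?_⟩
    · rw [hw_charVec, card_insert_of_notMem his]; omega
    · rw [dotProduct_charVec, sum_insert his, h, hi, add_zero]
  · refine ⟨charVec (insert j s), ?_, ?_⟩
    · rw [hw_charVec, card_insert_of_notMem hjs]; omega
    · rw [dotProduct_charVec, sum_insert hjs, h, hj, zero_add]

end

/-- The maximum eigenvalue of the Hadamard graph `H_n`, `n = 4t`, is `C(n,n/2)`,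
attained exactly at `a = 0` and `a = 1_n`. -/
theorem hadamard_graph_max_eigenvalue (t : ℕ) (ht : 1 ≤ t) (n : ℕ) (hn : n = 4 * t) :
    (∀ a : Fin n → ZMod 2,
      (∑ x ∈ Finset.univ.filter (fun x : Fin n → ZMod 2 => hw x = n / 2),
          (-1 : ℤ) ^ (∑ i, x i * a i).val)
        ≤ (n.choose (n / 2) : ℤ)) ∧
    (∀ a : Fin n → ZMod 2,
      (∑ x ∈ Finset.univ.filter (fun x : Fin n → ZMod 2 => hw x = n / 2),
          (-1 : ℤ) ^ (∑ i, x i * a i).val)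
        = (n.choose (n / 2) : ℤ) ↔ a = (fun _ => 0) ∨ a = (fun _ => 1)) := by
  refine ⟨weightCharSum_le_choose (n / 2), fun a => ?_⟩
  change weightCharSum (n / 2) a = _ ↔ _
  rw [weightCharSum_eq_choose_iff]
  constructor
  · intro h
    by_contra! ha
    obtain ⟨x, hx, hxa⟩ :=
      exists_hw_eq_dotProduct_eq_one (w := n / 2) (by omega) (by omega) ha.1 ha.2
    exact one_ne_zero (hxa ▸ h x hx)
  · rintro (rfl | rfl) x hx
    · exact dotProduct_zero x
    · change x ⬝ᵥ 1 = 0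
      rw [dotProduct_one, sum_eq_hw, hx, ZMod.natCast_eq_zero_iff_even]
      exact ⟨t, by omega⟩
end

section
/- For the binary Krawtchouk polynomial with n = 4t+2 and ℓ = 2t+2: if r = 2j then K_{2t+2}^{4t+2}(2j) = (-1)^j [C(2t,j) - C(2t,j-1)] C(4t+2, 2t+2) / C(4t+2, 2j), and if r = 2j+1 then K_{2t+2}^{4t+2}(2j+1) = (-1)^{j+1} · 2 C(2t,j) C(4t+2, 2t+2) / C(4t+2, 2j+1). -/
/-!
Krawtchouk reciprocity `C(n,r) K_ℓ(r) = C(n,ℓ) K_r(ℓ)` holds term by term, both products of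
binomials being the multinomial coefficient `n! / (i! (r-i)! (ℓ-i)! (n-r-ℓ+i)!)`. It turns the
claim into one about `K_r^{4t+2}(2t+2)`, the coefficient of `x^r` in
`(1-x)^{2t+2} (1+x)^{2t} = (1-x)^2 (1-x^2)^{2t}`, which can be read off directly.
-/

/-- Binary Krawtchouk polynomial `K_ℓ^n(r) = ∑_{i=0}^ℓ (-1)^i C(r,i) C(n-r, ℓ-i)`. -/
def binKraw (n ℓ r : ℕ) : ℤ :=
  ∑ i ∈ Finset.range (ℓ + 1), (-1 : ℤ) ^ i * (r.choose i) * ((n - r).choose (ℓ - i))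

open Finset Polynomial

theorem Nat.choose_mul_choose_sub_comm (m a b : ℕ) :
    m.choose a * (m - a).choose b = m.choose b * (m - b).choose a := by
  have h₁ := Nat.choose_mul (n := m) (Nat.le_add_right a b)
  have h₂ := Nat.choose_mul (n := m) (Nat.le_add_left b a)
  rw [Nat.add_sub_cancel_left] at h₁
  rw [Nat.add_sub_cancel] at h₂
  rw [← h₁, ← h₂, Nat.choose_symm_add]

theorem Nat.choose_mul_choose_mul_choose_sub_comm {n r ℓ i : ℕ} (hir : i ≤ r)
    (hiℓ : i ≤ ℓ) :
    n.choose r * r.choose i * (n - r).choose (ℓ - i)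
      = n.choose ℓ * ℓ.choose i * (n - ℓ).choose (r - i) := by
  rw [Nat.choose_mul hir, Nat.choose_mul hiℓ, mul_assoc, mul_assoc,
    show n - r = n - i - (r - i) by omega, show n - ℓ = n - i - (ℓ - i) by omega,
    Nat.choose_mul_choose_sub_comm]

theorem choose_mul_binKraw_eq_sum (n ℓ r : ℕ) :
    (n.choose r : ℤ) * binKraw n ℓ r
      = ∑ i ∈ range (min ℓ r + 1),
          (-1) ^ i * ((n.choose r * r.choose i * (n - r).choose (ℓ - i) : ℕ) : ℤ) := by
  calc (n.choose r : ℤ) * binKraw n ℓ r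
      = ∑ i ∈ range (ℓ + 1),
          (-1) ^ i * ((n.choose r * r.choose i * (n - r).choose (ℓ - i) : ℕ) : ℤ) := by
        rw [binKraw, mul_sum]
        refine sum_congr rfl fun i _ => ?_
        push_cast
        ring
    _ = _ := by
        refine (sum_subset (range_subset_range.mpr (by omega)) fun i _ hi => ?_).symm
        rw [Nat.choose_eq_zero_of_lt (by grind : r < i)]
        simp

theorem choose_mul_binKraw_comm (n ℓ r : ℕ) :
    (n.choose r : ℤ) * binKraw n ℓ r = n.choose ℓ * binKraw n r ℓ := by
  rw [choose_mul_binKraw_eq_sum, choose_mul_binKraw_eq_sum, min_comm]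
  refine sum_congr rfl fun i hi => ?_
  rw [mem_range, Nat.lt_succ_iff, le_min_iff] at hi
  rw [Nat.choose_mul_choose_mul_choose_sub_comm hi.2 hi.1]

theorem coeff_one_sub_X_pow {R : Type*} [CommRing R] (r k : ℕ) :
    ((1 - X : R[X]) ^ r).coeff k = (-1) ^ k * r.choose k := by
  rw [show (1 - X : R[X]) ^ r = C ((-1) ^ r) * (X + C (-1)) ^ r by
      simp [← mul_pow, sub_eq_add_neg],
    coeff_C_mul, coeff_X_add_C_pow, ← mul_assoc, ← pow_add]
  rcases le_or_gt k r with hkr | hrk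
  · rw [show r + (r - k) = k + 2 * (r - k) by omega, pow_add, pow_mul]
    simp
  · simp [Nat.choose_eq_zero_of_lt hrk]

theorem coeff_one_sub_X_pow_two_pow_even {R : Type*} [CommRing R] (m j : ℕ) :
    ((1 - X ^ 2 : R[X]) ^ m).coeff (2 * j) = (-1) ^ j * m.choose j := by
  rw [show (1 - X ^ 2 : R[X]) ^ m = expand R 2 ((1 - X) ^ m) by simp, coeff_expand two_pos]
  simp [coeff_one_sub_X_pow]

theorem coeff_one_sub_X_pow_two_pow_odd {R : Type*} [CommRing R] (m j : ℕ) :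
    ((1 - X ^ 2 : R[X]) ^ m).coeff (2 * j + 1) = 0 := by
  rw [show (1 - X ^ 2 : R[X]) ^ m = expand R 2 ((1 - X) ^ m) by simp, coeff_expand two_pos]
  simp

theorem binKraw_eq_coeff (n ℓ r : ℕ) :
    binKraw n ℓ r = ((1 - X : ℤ[X]) ^ r * (1 + X) ^ (n - r)).coeff ℓ := by
  rw [binKraw, coeff_mul, Nat.sum_antidiagonal_eq_sum_range_succ
    (fun a b => ((1 - X : ℤ[X]) ^ r).coeff a * ((1 + X : ℤ[X]) ^ (n - r)).coeff b)]
  simp only [coeff_one_sub_X_pow, coeff_one_add_X_pow]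

theorem binKraw_two_mul_add_two_eq_coeff (m r : ℕ) :
    binKraw (2 * m + 2) r (m + 2) = ((1 - X : ℤ[X]) ^ 2 * (1 - X ^ 2) ^ m).coeff r := by
  rw [binKraw_eq_coeff, show 2 * m + 2 - (m + 2) = m by omega, pow_add,
    mul_comm ((1 - X) ^ m), mul_assoc, ← mul_pow,
    show (1 - X) * (1 + X) = (1 - X ^ 2 : ℤ[X]) by ring]

section

variable {R : Type*} [CommRing R] (g : R[X])

theorem coeff_one_sub_X_sq_mul_one :
    ((1 - X) ^ 2 * g).coeff 1 = g.coeff 1 - 2 * g.coeff 0 := by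
  rw [show (1 - X) ^ 2 * g = g - 2 * (X * g) + X ^ 2 * g by ring,
    coeff_add, coeff_sub, coeff_ofNat_mul, coeff_X_mul, coeff_X_pow_mul']
  simp

theorem coeff_one_sub_X_sq_mul_add_two (k : ℕ) :
    ((1 - X) ^ 2 * g).coeff (k + 2) = g.coeff (k + 2) - 2 * g.coeff (k + 1) + g.coeff k := by
  rw [show (1 - X) ^ 2 * g = g - 2 * (X * g) + X ^ 2 * g by ring,
    coeff_add, coeff_sub, coeff_ofNat_mul, coeff_X_mul, coeff_X_pow_mul]

end

theorem binKraw_two_mul_add_two_even (m j : ℕ) :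
    binKraw (2 * m + 2) (2 * j) (m + 2)
      = (-1) ^ j * (m.choose j - if 1 ≤ j then (m.choose (j - 1) : ℤ) else 0) := by
  rw [binKraw_two_mul_add_two_eq_coeff]
  rcases j with _ | i
  · simp [coeff_zero_eq_eval_zero]
  · rw [show 2 * (i + 1) = 2 * i + 2 by ring, coeff_one_sub_X_sq_mul_add_two,
      coeff_one_sub_X_pow_two_pow_odd, show 2 * i + 2 = 2 * (i + 1) by ring,
      coeff_one_sub_X_pow_two_pow_even, coeff_one_sub_X_pow_two_pow_even]
    simp only [le_add_iff_nonneg_left, zero_le, if_true, Nat.add_sub_cancel]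
    ring

theorem binKraw_two_mul_add_two_odd (m j : ℕ) :
    binKraw (2 * m + 2) (2 * j + 1) (m + 2) = (-1) ^ (j + 1) * 2 * m.choose j := by
  rw [binKraw_two_mul_add_two_eq_coeff]
  rcases j with _ | i
  · have h₁ := coeff_one_sub_X_pow_two_pow_odd (R := ℤ) m 0
    have h₀ := coeff_one_sub_X_pow_two_pow_even (R := ℤ) m 0
    simp_all [coeff_one_sub_X_sq_mul_one]
  · rw [show 2 * (i + 1) + 1 = 2 * i + 1 + 2 by ring, coeff_one_sub_X_sq_mul_add_two,
      show 2 * i + 1 + 2 = 2 * (i + 1) + 1 by ring, coeff_one_sub_X_pow_two_pow_odd,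
      coeff_one_sub_X_pow_two_pow_odd, show 2 * i + 1 + 1 = 2 * (i + 1) by ring,
      coeff_one_sub_X_pow_two_pow_even]
    ring

theorem binKraw_cast_eq_div {n r : ℕ} (ℓ : ℕ) (hr : r ≤ n) :
    (binKraw n ℓ r : ℚ) = binKraw n r ℓ * n.choose ℓ / n.choose r := by
  rw [eq_div_iff (by exact_mod_cast (Nat.choose_pos hr).ne'), mul_comm,
    mul_comm _ (n.choose ℓ : ℚ)]
  exact_mod_cast choose_mul_binKraw_comm n ℓ r

theorem binKraw_4t_add_two_general (t j : ℕ) :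
    (2 * j ≤ 4 * t + 2 →
      ((binKraw (4 * t + 2) (2 * t + 2) (2 * j) : ℤ) : ℚ)
        = (-1 : ℚ) ^ j
            * (((2 * t).choose j : ℚ) - (if 1 ≤ j then ((2 * t).choose (j - 1) : ℚ) else 0))
            * ((4 * t + 2).choose (2 * t + 2)) / ((4 * t + 2).choose (2 * j))) ∧
    (2 * j + 1 ≤ 4 * t + 2 →
      ((binKraw (4 * t + 2) (2 * t + 2) (2 * j + 1) : ℤ) : ℚ)
        = (-1 : ℚ) ^ (j + 1) * 2 * ((2 * t).choose j)
            * ((4 * t + 2).choose (2 * t + 2)) / ((4 * t + 2).choose (2 * j + 1))) := by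
  have hn : 2 * (2 * t) + 2 = 4 * t + 2 := by ring
  have h_even := binKraw_two_mul_add_two_even (2 * t) j
  have h_odd := binKraw_two_mul_add_two_odd (2 * t) j
  rw [hn] at h_even h_odd
  refine ⟨fun hr => ?_, fun hr => ?_⟩
  · rw [binKraw_cast_eq_div _ hr, h_even]
    push_cast
    ring
  · rw [binKraw_cast_eq_div _ hr, h_odd]
    push_cast
    ring

/-- Eigenvalues of the Hamming graph `H_{4t+2,2t+2}`: explicit formulas for
`K_{2t+2}^{4t+2}(2j)` and `K_{2t+2}^{4t+2}(2j+1)`, with the convention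
`C(2t,-1) = 0`. -/
theorem binKraw_4t_add_two (t j : ℕ) (ht : 1 ≤ t) :
    (2 * j ≤ 4 * t + 2 →
      ((binKraw (4 * t + 2) (2 * t + 2) (2 * j) : ℤ) : ℚ)
        = (-1 : ℚ) ^ j
            * (((2 * t).choose j : ℚ) - (if 1 ≤ j then ((2 * t).choose (j - 1) : ℚ) else 0))
            * ((4 * t + 2).choose (2 * t + 2)) / ((4 * t + 2).choose (2 * j))) ∧
    (2 * j + 1 ≤ 4 * t + 2 →
      ((binKraw (4 * t + 2) (2 * t + 2) (2 * j + 1) : ℤ) : ℚ)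
        = (-1 : ℚ) ^ (j + 1) * 2 * ((2 * t).choose j)
            * ((4 * t + 2).choose (2 * t + 2)) / ((4 * t + 2).choose (2 * j + 1))) :=
  binKraw_4t_add_two_general t j
end
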